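/- Consider the reframed closed-loop bittide dynamics θ'(t) = A·θ(t) + ω^u + q* + r, where A is an irreducible rate matrix with positive left null vector z (z > 0 entrywise, z^T A = 0, 1^T z = 1), W = 1·z^T is the spectral projector, r satisfies W·r = 0, and the reframing offset is q* = (W − I)·ω^u + W·r. Then for any initial condition, the correction c(t) = A·θ(t) + q* + r converges to (W − I)·ω^u as t → ∞, and hence the frequency ω(t) = θ'(t) = c(t) + ω^u converges to W·ω^u = 1·(z^T ω^u). -/

import Mathlib

open Matrix Filter

/-- A matrix is Metzler if all its off-diagonal entries are nonnegative. -/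
def IsMetzler {n : ℕ} (Q : Matrix (Fin n) (Fin n) ℝ) : Prop :=
  ∀ i j, i ≠ j → 0 ≤ Q i j

/-- A rate matrix is a Metzler matrix whose rows each sum to zero. -/
def IsRateMatrix {n : ℕ} (Q : Matrix (Fin n) (Fin n) ℝ) : Prop :=
  IsMetzler Q ∧ Q *ᵥ (fun _ => (1 : ℝ)) = 0

/-- A matrix is irreducible if the directed graph with an edge `i → j` whenever
`i ≠ j` and `Q i j ≠ 0` is strongly connected. -/
def IsIrreducibleMatrix {n : ℕ} (Q : Matrix (Fin n) (Fin n) ℝ) : Prop :=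
  ∀ i j : Fin n, i ≠ j → Relation.TransGen (fun a b => a ≠ b ∧ Q a b ≠ 0) i j

/-!
The deviation `y = c - (W - 1) ωᵘ = A θ + r` solves `y' = A y` and stays on the hyperplane
`z ⬝ᵥ y = 0`. Since `A 1 = 0` and `zᵀ A = 0`, the weighted energy `V(y) = ∑ zᵢ yᵢ²` decreases
along solutions at the rate of the Dirichlet form `D(y) = ∑ zᵢ Aᵢⱼ (yⱼ - yᵢ)²`. By
irreducibility `D` vanishes only on constant vectors, which meet the hyperplane only in `0`;
compactness of the unit sphere then gives a spectral gap `μ V ≤ D` on the hyperplane, and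
Grönwall's inequality yields `V(y(t)) ≤ V(y(0)) e^{-μ t} → 0`.
-/

lemma hasDerivAt_mulVec {m k : Type*} [Fintype m] [Fintype k] (A : Matrix m k ℝ)
    {θ : ℝ → k → ℝ} {θ' : k → ℝ} {t : ℝ} (h : HasDerivAt θ θ' t) :
    HasDerivAt (fun s => A *ᵥ θ s) (A *ᵥ θ') t :=
  (LinearMap.toContinuousLinearMap A.mulVecLin).hasFDerivAt.comp_hasDerivAt t h

section

variable {ι : Type*} [Fintype ι] (A : Matrix ι ι ℝ) (z : ι → ℝ)

def weightedSqNorm (y : ι → ℝ) : ℝ := ∑ i, z i * y i ^ 2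

def dirichletForm (y : ι → ℝ) : ℝ := ∑ i, ∑ j, z i * A i j * (y j - y i) ^ 2

variable {A z}

lemma weightedSqNorm_smul (c : ℝ) (y : ι → ℝ) :
    weightedSqNorm z (c • y) = c ^ 2 * weightedSqNorm z y := by
  simp only [weightedSqNorm, Pi.smul_apply, smul_eq_mul, Finset.mul_sum]
  exact Finset.sum_congr rfl fun i _ => by ring

lemma dirichletForm_smul (c : ℝ) (y : ι → ℝ) :
    dirichletForm A z (c • y) = c ^ 2 * dirichletForm A z y := by
  simp only [dirichletForm, Pi.smul_apply, smul_eq_mul, Finset.mul_sum]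
  exact Finset.sum_congr rfl fun i _ => Finset.sum_congr rfl fun j _ => by ring

lemma weightedSqNorm_pos (hz : ∀ i, 0 < z i) {y : ι → ℝ} (hy : y ≠ 0) :
    0 < weightedSqNorm z y := by
  obtain ⟨i, hi⟩ := Function.ne_iff.mp hy
  exact Finset.sum_pos' (fun j _ => mul_nonneg (hz j).le (sq_nonneg _))
    ⟨i, Finset.mem_univ i, mul_pos (hz i) (pow_two_pos_of_ne_zero hi)⟩

lemma weightedSqNorm_nonneg (hz : ∀ i, 0 ≤ z i) (y : ι → ℝ) : 0 ≤ weightedSqNorm z y :=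
  Finset.sum_nonneg fun i _ => mul_nonneg (hz i) (sq_nonneg _)

lemma mul_sq_le_weightedSqNorm (hz : ∀ i, 0 ≤ z i) (y : ι → ℝ) (i : ι) :
    z i * y i ^ 2 ≤ weightedSqNorm z y :=
  Finset.single_le_sum (f := fun j => z j * y j ^ 2)
    (fun j _ => mul_nonneg (hz j) (sq_nonneg _)) (Finset.mem_univ i)

lemma two_mul_sum_mul_mulVec_eq_neg_dirichletForm (hA : A *ᵥ (fun _ => (1 : ℝ)) = 0)
    (hz : z ᵥ* A = 0) (y : ι → ℝ) :
    2 * ∑ i, z i * y i * (A *ᵥ y) i = -dirichletForm A z y := by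
  have hrow : ∀ i, ∑ j, A i j = 0 := fun i => by
    simpa [mulVec, dotProduct] using congrFun hA i
  have hcol : ∀ j, ∑ i, z i * A i j = 0 := fun j => by
    simpa [vecMul, dotProduct] using congrFun hz j
  have hexpand : dirichletForm A z y = ∑ j, y j ^ 2 * ∑ i, z i * A i j
      - 2 * ∑ i, z i * y i * (A *ᵥ y) i + ∑ i, z i * y i ^ 2 * ∑ j, A i j := by
    simp only [dirichletForm, mulVec, dotProduct, Finset.mul_sum]
    rw [Finset.sum_comm (f := fun j i => y j ^ 2 * (z i * A i j)), ← Finset.sum_sub_distrib,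
      ← Finset.sum_add_distrib]
    refine Finset.sum_congr rfl fun i _ => ?_
    rw [← Finset.sum_sub_distrib, ← Finset.sum_add_distrib]
    exact Finset.sum_congr rfl fun j _ => by ring
  simp only [hexpand, hrow, hcol, mul_zero, Finset.sum_const_zero]
  ring

lemma hasDerivAt_weightedSqNorm {y : ℝ → ι → ℝ} {y' : ι → ℝ} {t : ℝ}
    (hy : HasDerivAt y y' t) :
    HasDerivAt (fun s => weightedSqNorm z (y s)) (2 * ∑ i, z i * y t i * y' i) t := by
  have hterm : ∀ i ∈ Finset.univ,
      HasDerivAt (fun s => z i * y s i ^ 2) (z i * (2 * y t i * y' i)) t := fun i _ => by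
    simpa using ((hasDerivAt_pi.mp hy i).pow 2).const_mul (z i)
  refine (HasDerivAt.fun_sum hterm).congr_deriv ?_
  rw [Finset.mul_sum]
  exact Finset.sum_congr rfl fun i _ => by ring

end

section

variable {n : ℕ} {A : Matrix (Fin n) (Fin n) ℝ} {z : Fin n → ℝ}

lemma dirichletForm_term_nonneg (hA : IsMetzler A) (hz : ∀ i, 0 ≤ z i) (y : Fin n → ℝ)
    (i j : Fin n) : 0 ≤ z i * A i j * (y j - y i) ^ 2 := by
  rcases eq_or_ne i j with rfl | hij
  · simp
  · exact mul_nonneg (mul_nonneg (hz i) (hA i j hij)) (sq_nonneg _)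

lemma dirichletForm_nonneg (hA : IsMetzler A) (hz : ∀ i, 0 ≤ z i) (y : Fin n → ℝ) :
    0 ≤ dirichletForm A z y :=
  Finset.sum_nonneg fun i _ => Finset.sum_nonneg fun j _ => dirichletForm_term_nonneg hA hz y i j

lemma eq_of_dirichletForm_eq_zero (hA : IsMetzler A) (hirr : IsIrreducibleMatrix A)
    (hz : ∀ i, 0 < z i) {y : Fin n → ℝ} (hy : dirichletForm A z y = 0) (i j : Fin n) :
    y i = y j := by
  have hterm : ∀ a b, z a * A a b * (y b - y a) ^ 2 = 0 := fun a b => by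
    have hnn := dirichletForm_term_nonneg hA (fun i => (hz i).le) y
    have hrow := (Finset.sum_eq_zero_iff_of_nonneg fun a _ =>
      Finset.sum_nonneg fun b _ => hnn a b).mp hy a (Finset.mem_univ a)
    exact (Finset.sum_eq_zero_iff_of_nonneg fun b _ => hnn a b).mp hrow b (Finset.mem_univ b)
  have hedge : ∀ a b, a ≠ b ∧ A a b ≠ 0 → y a = y b := by
    rintro a b ⟨-, hab⟩
    have hsq := (mul_eq_zero.mp (hterm a b)).resolve_left (mul_ne_zero (hz a).ne' hab)
    linarith [pow_eq_zero_iff two_ne_zero |>.mp hsq]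
  rcases eq_or_ne i j with rfl | hij
  · rfl
  have hpath := hirr i j hij
  clear hij
  induction hpath with
  | single h => exact hedge _ _ h
  | tail _ h ih => exact ih.trans (hedge _ _ h)

lemma eq_zero_of_dirichletForm_eq_zero (hA : IsMetzler A) (hirr : IsIrreducibleMatrix A)
    (hz : ∀ i, 0 < z i) {y : Fin n → ℝ} (hy : dirichletForm A z y = 0) (hzy : z ⬝ᵥ y = 0) :
    y = 0 := by
  funext i
  have hsum : 0 < ∑ j, z j := Finset.sum_pos (fun j _ => hz j) ⟨i, Finset.mem_univ i⟩
  have : z ⬝ᵥ y = (∑ j, z j) * y i := by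
    rw [dotProduct, Finset.sum_mul]
    exact Finset.sum_congr rfl fun j _ => by rw [eq_of_dirichletForm_eq_zero hA hirr hz hy j i]
  simpa [hsum.ne'] using this.symm.trans hzy

lemma exists_pos_mul_weightedSqNorm_le_dirichletForm (hA : IsMetzler A)
    (hirr : IsIrreducibleMatrix A) (hz : ∀ i, 0 < z i) :
    ∃ μ > 0, ∀ y, z ⬝ᵥ y = 0 → μ * weightedSqNorm z y ≤ dirichletForm A z y := by
  set S := Metric.sphere (0 : Fin n → ℝ) 1 ∩ {y | z ⬝ᵥ y = 0}
  have hS : IsCompact S :=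
    (isCompact_sphere 0 1).inter_right (isClosed_eq (by fun_prop) continuous_const)
  have hne : ∀ y ∈ S, y ≠ 0 := fun y hy h => by simp [S, h] at hy
  have hV : ∀ y ∈ S, 0 < weightedSqNorm z y := fun y hy => weightedSqNorm_pos hz (hne y hy)
  have hcont : ContinuousOn (fun y => dirichletForm A z y / weightedSqNorm z y) S :=
    (by unfold dirichletForm; fun_prop : Continuous (dirichletForm A z)).continuousOn.div
      (by unfold weightedSqNorm; fun_prop : Continuous (weightedSqNorm z)).continuousOn
      fun y hy => (hV y hy).ne'
  have hpos : ∀ y ∈ S, 0 < dirichletForm A z y / weightedSqNorm z y := fun y hy =>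
    div_pos ((dirichletForm_nonneg hA (fun i => (hz i).le) y).lt_of_ne' fun hD =>
      hne y hy (eq_zero_of_dirichletForm_eq_zero hA hirr hz hD hy.2)) (hV y hy)
  obtain ⟨μ, hμ, hμS⟩ := hS.exists_forall_le' hcont hpos
  refine ⟨μ, hμ, fun y hy => ?_⟩
  rcases eq_or_ne y 0 with rfl | hy0
  · simp [weightedSqNorm, dirichletForm]
  have hu : ‖y‖⁻¹ • y ∈ S :=
    ⟨by simpa using norm_smul_inv_norm (𝕜 := ℝ) hy0, by simp [dotProduct_smul, hy]⟩
  have := hμS _ hu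
  rw [weightedSqNorm_smul, dirichletForm_smul, mul_div_mul_left _ _ (by positivity)] at this
  exact (le_div_iff₀ (weightedSqNorm_pos hz hy0)).mp this

theorem tendsto_zero_of_hasDerivAt_mulVec (hA : IsRateMatrix A) (hirr : IsIrreducibleMatrix A)
    (hz : ∀ i, 0 < z i) (hzA : z ᵥ* A = 0) {y : ℝ → Fin n → ℝ}
    (hy : ∀ t, 0 ≤ t → HasDerivAt y (A *ᵥ y t) t) (hzy : ∀ t, z ⬝ᵥ y t = 0) :
    Tendsto y atTop (nhds 0) := by
  obtain ⟨μ, hμ, hgap⟩ := exists_pos_mul_weightedSqNorm_le_dirichletForm hA.1 hirr hz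
  have hderiv : ∀ t, 0 ≤ t →
      HasDerivAt (fun s => weightedSqNorm z (y s)) (-dirichletForm A z (y t)) t := fun t ht =>
    (hasDerivAt_weightedSqNorm (hy t ht)).congr_deriv
      (two_mul_sum_mul_mulVec_eq_neg_dirichletForm hA.2 hzA (y t))
  have hdecay : ∀ t, 0 ≤ t →
      weightedSqNorm z (y t) ≤ weightedSqNorm z (y 0) * Real.exp (-μ * t) := fun t ht => by
    simpa [gronwallBound_ε0] using le_gronwallBound_of_liminf_deriv_right_le (K := -μ) (ε := 0)
      (fun s hs => (hderiv s hs.1).continuousAt.continuousWithinAt)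
      (fun s hs _ hr => (hderiv s hs.1).hasDerivWithinAt.liminf_right_slope_le hr) le_rfl
      (fun s hs => by linarith [hgap (y s) (hzy s)]) t ⟨ht, le_rfl⟩
  have hV : Tendsto (fun t => weightedSqNorm z (y t)) atTop (nhds 0) := by
    refine squeeze_zero' (Eventually.of_forall fun t =>
      weightedSqNorm_nonneg (fun i => (hz i).le) _) ((eventually_ge_atTop 0).mono hdecay) ?_
    simpa using (Real.tendsto_exp_neg_atTop_nhds_zero.comp
      (tendsto_id.const_mul_atTop hμ)).const_mul (weightedSqNorm z (y 0))
  refine tendsto_pi_nhds.mpr fun i => squeeze_zero_norm' ?_ (by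
    simpa using (hV.div_const (z i)).sqrt)
  refine Eventually.of_forall fun t => Real.abs_le_sqrt ((le_div_iff₀' (hz i)).mpr ?_)
  exact mul_sq_le_weightedSqNorm (fun j => (hz j).le) (y t) i

end

/-- Reframed closed-loop bittide dynamics `θ'(t) = A θ(t) + ωᵘ + q* + r`, with
`A` an irreducible rate matrix with positive left null vector `z`, spectral
projector `W = 1·zᵀ`, `W r = 0`, and reframing offset
`q* = (W - I)·ωᵘ + W·r`.  Then the correction `c(t) = A θ(t) + q* + r`
converges to `(W - I)·ωᵘ`, and the frequency `ω(t) = θ'(t) = c(t) + ωᵘ`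
converges to `W·ωᵘ = 1·(zᵀ ωᵘ)`. -/
theorem reframed_correction_and_frequency_tendsto {n : ℕ}
    (A : Matrix (Fin n) (Fin n) ℝ)
    (hrate : IsRateMatrix A) (hirr : IsIrreducibleMatrix A)
    (z : Fin n → ℝ) (hz_pos : ∀ i, 0 < z i)
    (hz_left : z ᵥ* A = 0) (hz_sum : ∑ i, z i = 1)
    (W : Matrix (Fin n) (Fin n) ℝ) (hW : W = vecMulVec (fun _ => (1 : ℝ)) z)
    (ωu r qs : Fin n → ℝ) (hr : W *ᵥ r = 0)
    (hqs : qs = (W - 1) *ᵥ ωu + W *ᵥ r)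
    (θ : ℝ → Fin n → ℝ)
    (hθ : ∀ t : ℝ, 0 ≤ t → HasDerivAt θ (A *ᵥ θ t + ωu + qs + r) t)
    (c : ℝ → Fin n → ℝ) (hc : ∀ t : ℝ, c t = A *ᵥ θ t + qs + r) :
    Tendsto c atTop (nhds ((W - 1) *ᵥ ωu)) ∧
      Tendsto (fun t : ℝ => c t + ωu) atTop (nhds (W *ᵥ ωu)) ∧
      W *ᵥ ωu = fun _ => z ⬝ᵥ ωu := by
  have hWv : ∀ v, W *ᵥ v = fun _ => z ⬝ᵥ v := fun v => by
    funext i; simp [hW, mulVec, vecMulVec_apply, dotProduct]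
  have hAW : ∀ v, A *ᵥ (W *ᵥ v) = 0 := fun v => by
    rw [hWv, ← mul_one (z ⬝ᵥ v), ← smul_eq_mul, ← Pi.smul_def, mulVec_smul, hrate.2, smul_zero]
  have hzr : z ⬝ᵥ r = 0 := by
    have := congrArg (z ⬝ᵥ ·) hr
    simpa [hWv, dotProduct, ← Finset.sum_mul, hz_sum] using this
  have hc_eq : c = fun t => (A *ᵥ θ t + r) + (W - 1) *ᵥ ωu := funext fun t => by
    rw [hc, hqs, hr]; abel
  have hdev : ∀ t, 0 ≤ t →
      HasDerivAt (fun s => A *ᵥ θ s + r) (A *ᵥ (A *ᵥ θ t + r)) t := fun t ht => by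
    have hθ' : A *ᵥ θ t + ωu + qs + r = (A *ᵥ θ t + r) + W *ᵥ ωu := by
      rw [hqs, hr, sub_mulVec, one_mulVec]; abel
    exact ((hasDerivAt_mulVec A (hθ t ht)).add_const r).congr_deriv
      (by rw [hθ', mulVec_add, hAW, add_zero])
  have hzdev : ∀ t, z ⬝ᵥ (A *ᵥ θ t + r) = 0 := fun t => by
    rw [dotProduct_add, dotProduct_mulVec, hz_left, zero_dotProduct, hzr, add_zero]
  have hc_lim : Tendsto c atTop (nhds ((W - 1) *ᵥ ωu)) := by
    rw [hc_eq]
    simpa using (tendsto_zero_of_hasDerivAt_mulVec hrate hirr hz_pos hz_left hdev hzdev).add_const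
      ((W - 1) *ᵥ ωu)
  refine ⟨hc_lim, ?_, hWv ωu⟩
  simpa [sub_mulVec] using hc_lim.add_const ωu
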